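/- arXiv:1810.05693 — 2 statements merged into one kernel-verified Lean document; each statement's English description precedes it below -/
import Mathlib

section
/- Let 0 < α < β and let γ₁ < γ₂ ≤ 0 with βγ₁ > −1. Then C_{α,β,γ₁}(ε) > C_{α,β,γ₂}(ε) for all ε ∈ (0,1), while C_{α,β,γ₁}(ε) = C_{α,β,γ₂}(ε) for ε = 0 and ε = 1. -/
/-!
With `ℓ = log ε < 0` and `softplus x = log (1 + exp x)`, one has
`log C_{α,β,γ}(ε) = softplus (ℓ + ℓγβ) / β - softplus (ℓ + ℓγα) / α + const`.
For `γ₁ < γ₂ ≤ 0`, `(softplus (ℓ + ℓγ₁t) - softplus (ℓ + ℓγ₂t)) / t` is `ℓ(γ₁ - γ₂) > 0` times the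
slope of `softplus` between `ℓ + ℓγ₂t` and `ℓ + ℓγ₁t`. Both endpoints are nondecreasing in `t`,
the upper one strictly, so strict convexity of `softplus` makes this quotient strictly increasing
in `t`; comparing `t = α` with `t = β` gives the inequality.
-/

open Set

/-- The function `C_{α,β,γ}(ε)` from the paper:
`C_{α,β,γ}(ε) = (ε^{γβ+1}+1)^{1/β} (1+ε)^{1/α} / ((ε^{γα+1}+1)^{1/α} (1+ε)^{1/β})`. -/
noncomputable def Cfun (α β γ ε : ℝ) : ℝ :=
  ((ε ^ (γ * β + 1) + 1) ^ (1 / β) * (1 + ε) ^ (1 / α)) /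
    ((ε ^ (γ * α + 1) + 1) ^ (1 / α) * (1 + ε) ^ (1 / β))

section Slope

variable {𝕜 : Type*} [Field 𝕜] [LinearOrder 𝕜] [IsStrictOrderedRing 𝕜] {s : Set 𝕜} {f : 𝕜 → 𝕜}

theorem StrictConvexOn.slope_lt_slope_of_le_of_lt (hf : StrictConvexOn 𝕜 s f)
    {x y x' y' : 𝕜} (hx : x ∈ s) (hy : y ∈ s) (hx' : x' ∈ s) (hy' : y' ∈ s)
    (hxy : x < y) (hxy' : x' < y') (hxx' : x ≤ x') (hyy' : y < y') :
    (f y - f x) / (y - x) < (f y' - f x') / (y' - x') := by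
  calc (f y - f x) / (y - x) < (f y' - f x) / (y' - x) :=
        hf.secant_strict_mono hx hy hy' hxy.ne' (hxy.trans hyy').ne' hyy'
    _ = (f x - f y') / (x - y') := by rw [← neg_sub (f x), ← neg_sub x, neg_div_neg_eq]
    _ ≤ (f x' - f y') / (x' - y') :=
        hf.convexOn.secant_mono hy' hx hx' (hxy.trans hyy').ne hxy'.ne hxx'
    _ = (f y' - f x') / (y' - x') := by rw [← neg_sub (f x'), ← neg_sub x', neg_div_neg_eq]

end Slope

theorem StrictConvexOn.strictMonoOn_sub_div {f : ℝ → ℝ} (hf : StrictConvexOn ℝ univ f)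
    (c : ℝ) {m n : ℝ} (hm : 0 ≤ m) (hmn : m < n) :
    StrictMonoOn (fun t => (f (c + n * t) - f (c + m * t)) / t) (Ioi 0) := by
  intro s (hs : 0 < s) t (ht : 0 < t) hst
  have hgap : ∀ u : ℝ, 0 < u →
      (f (c + n * u) - f (c + m * u)) / u =
        (n - m) * ((f (c + n * u) - f (c + m * u)) / (c + n * u - (c + m * u))) := by
    intro u hu
    rw [show c + n * u - (c + m * u) = (n - m) * u by ring]
    have : n - m ≠ 0 := sub_ne_zero.mpr hmn.ne'
    field_simp
  simp only [hgap s hs, hgap t ht]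
  refine mul_lt_mul_of_pos_left ?_ (sub_pos.mpr hmn)
  exact hf.slope_lt_slope_of_le_of_lt trivial trivial trivial trivial (by nlinarith)
    (by nlinarith) (by nlinarith) (by nlinarith)

namespace Real

noncomputable def softplus (x : ℝ) : ℝ := log (1 + exp x)

theorem hasDerivAt_softplus (x : ℝ) : HasDerivAt softplus (sigmoid x) x := by
  refine (((hasDerivAt_exp x).const_add 1).log (by positivity)).congr_deriv ?_
  rw [sigmoid_def, exp_neg]
  field_simp
  ring

theorem strictConvexOn_softplus : StrictConvexOn ℝ univ softplus := by
  refine StrictMono.strictConvexOn_univ_of_deriv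
    (continuous_iff_continuousAt.mpr fun x => (hasDerivAt_softplus x).continuousAt) ?_
  rw [show deriv softplus = sigmoid from funext fun x => (hasDerivAt_softplus x).deriv]
  exact sigmoid_strictMono

end Real

open Real

theorem Cfun_pos (α β γ : ℝ) {ε : ℝ} (hε : 0 < ε) : 0 < Cfun α β γ ε := by
  unfold Cfun
  positivity

theorem log_Cfun (α β γ : ℝ) {ε : ℝ} (hε : 0 < ε) :
    log (Cfun α β γ ε) = softplus (log ε * (γ * β + 1)) / β -
      softplus (log ε * (γ * α + 1)) / α + (1 / α - 1 / β) * log (1 + ε) := by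
  have hsoftplus : ∀ s, log (ε ^ s + 1) = softplus (log ε * s) := fun s => by
    rw [rpow_def_of_pos hε, add_comm, softplus]
  unfold Cfun
  rw [log_div (by positivity) (by positivity), log_mul (by positivity) (by positivity),
    log_mul (by positivity) (by positivity), log_rpow (by positivity), log_rpow (by positivity),
    log_rpow (by positivity), log_rpow (by positivity), hsoftplus, hsoftplus]
  ring

theorem Cfun_lt_Cfun_of_gamma_lt {α β γ₁ γ₂ ε : ℝ} (hα : 0 < α) (hαβ : α < β) (hγ : γ₁ < γ₂)
    (hγ₂ : γ₂ ≤ 0) (hε₀ : 0 < ε) (hε₁ : ε < 1) : Cfun α β γ₂ ε < Cfun α β γ₁ ε := by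
  have hl : log ε < 0 := log_neg hε₀ hε₁
  have key := strictConvexOn_softplus.strictMonoOn_sub_div (log ε) (m := log ε * γ₂)
    (n := log ε * γ₁) (by nlinarith) (by nlinarith) hα (hα.trans hαβ) hαβ
  have hexp : ∀ γ t, log ε * (γ * t + 1) = log ε + log ε * γ * t := fun _ _ => by ring
  rw [← log_lt_log_iff (Cfun_pos _ _ _ hε₀) (Cfun_pos _ _ _ hε₀), log_Cfun _ _ _ hε₀,
    log_Cfun _ _ _ hε₀]
  simp only [hexp]
  simp only [sub_div] at key
  linarith

theorem Cfun_zero {α β γ : ℝ} (hβ : γ * β + 1 ≠ 0) (hα : γ * α + 1 ≠ 0) : Cfun α β γ 0 = 1 := by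
  simp [Cfun, zero_rpow hβ, zero_rpow hα]

theorem Cfun_one (α β γ : ℝ) : Cfun α β γ 1 = 1 := by
  unfold Cfun
  simp only [one_rpow]
  rw [mul_comm]
  exact div_self (by positivity)

/-- For `0 < α < β` and `γ₁ < γ₂ ≤ 0` with `βγ₁ > -1`, the curves `C_{α,β,γ₁}` and
`C_{α,β,γ₂}` satisfy `C_{α,β,γ₁}(ε) > C_{α,β,γ₂}(ε)` on `(0,1)`, with equality at the
endpoints `0` and `1`. -/
theorem Cfun_strict_anti_in_gamma_nonpos
    (α β γ₁ γ₂ : ℝ) (hα : 0 < α) (hαβ : α < β) (hγ : γ₁ < γ₂) (hγ₂ : γ₂ ≤ 0)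
    (hγ₁β : β * γ₁ > -1) :
    (∀ ε : ℝ, 0 < ε → ε < 1 → Cfun α β γ₁ ε > Cfun α β γ₂ ε) ∧
      Cfun α β γ₁ 0 = Cfun α β γ₂ 0 ∧ Cfun α β γ₁ 1 = Cfun α β γ₂ 1 := by
  refine ⟨fun ε hε₀ hε₁ => Cfun_lt_Cfun_of_gamma_lt hα hαβ hγ hγ₂ hε₀ hε₁, ?_,
    by rw [Cfun_one, Cfun_one]⟩
  rw [Cfun_zero, Cfun_zero] <;> exact ne_of_gt (by nlinarith)
end

section
/- Let 0 < α < β and define C_{α,β} = sup over γ ∈ (−1/β, ∞) of C_{α,β,γ}. Then C_{α,β} = max{2^{1/α − 1/β}, 2^{1/β}}; explicitly, C_{α,β} = 2^{1/α − 1/β} if 0 < α ≤ β/2, and C_{α,β} = 2^{1/β} if β/2 < α < β. -/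
/-!
Put `t = α / β` and `x = ε ^ (γβ + 1) ∈ [0, 1]`. Then `ε ^ (γα + 1) = x ^ t ε ^ (1 - t)` and
`C_{α,β,γ}(ε) ^ α = (1 + x) ^ t (1 + ε) ^ (1 - t) / (1 + x ^ t ε ^ (1 - t))`. Concavity of
`s ↦ s ^ t` gives `(1 + x) ^ t ≤ 1 + (2 ^ t - 1) x ^ t` on `[0, 1]`; together with the same bound
for `ε` and exponent `1 - t`, a bilinear estimate bounds the quotient by
`max (2 ^ t) (2 ^ (1 - t))`, whose `1/α`-th power is the claimed value. Both terms of the maximum are approached: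
as `γ → ∞` then `ε → 1`, `C_{α,β,γ}(ε) → (1 + ε) ^ (1/α - 1/β) → 2 ^ (1/α - 1/β)`, and as
`γ ↓ -1/β` then `ε → 0`, `C_{α,β,γ}(ε) → 2 ^ (1/β)`.
-/

open Set

/-- `C_{α,β,γ}`: the maximum of `C_{α,β,γ}(ε)` over `ε ∈ [0,1]`. -/
noncomputable def Cmax (α β γ : ℝ) : ℝ :=
  sSup (Cfun α β γ '' Icc (0 : ℝ) 1)

open Real Filter Topology

theorem add_one_rpow_sub_rpow_le {t s : ℝ} (ht₀ : 0 ≤ t) (ht₁ : t ≤ 1) (hs : 1 ≤ s) :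
    (s + 1) ^ t - s ^ t ≤ 2 ^ t - 1 := by
  set f : ℝ → ℝ := fun x => x ^ t
  have hf : ConcaveOn ℝ (Ici 0) f := concaveOn_rpow ht₀ ht₁
  have hs₀ : (0 : ℝ) ≤ s := by linarith
  calc (s + 1) ^ t - s ^ t = slope f (s + 1) s := by simp [f, slope_def_field, div_neg]
    _ ≤ slope f (s + 1) 1 :=
      hf.slope_anti (by simp; linarith) ⟨mem_Ici.2 zero_le_one, by simp; linarith⟩
        ⟨hs₀, by simp⟩ hs
    _ = slope f 1 (s + 1) := slope_comm f _ _
    _ ≤ slope f 1 2 :=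
      hf.slope_anti (mem_Ici.2 zero_le_one) ⟨mem_Ici.2 zero_le_two, by norm_num⟩
        ⟨by simp; linarith, by simp; linarith⟩ (by linarith)
    _ = 2 ^ t - 1 := by simp [f, slope_def_field]; norm_num

theorem one_add_rpow_le {t x : ℝ} (ht₀ : 0 ≤ t) (ht₁ : t ≤ 1) (hx₀ : 0 ≤ x) (hx₁ : x ≤ 1) :
    (1 + x) ^ t ≤ 1 + (2 ^ t - 1) * x ^ t := by
  rcases hx₀.eq_or_lt with rfl | hx₀
  · have : (1 : ℝ) ≤ 2 ^ t := one_le_rpow one_le_two ht₀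
    simp only [add_zero, one_rpow, le_add_iff_nonneg_right]
    exact mul_nonneg (by linarith) (rpow_nonneg le_rfl t)
  -- `add_one_rpow_sub_rpow_le` at `s = x⁻¹`, rescaled by `x ^ t`
  have h := add_one_rpow_sub_rpow_le ht₀ ht₁ (one_le_inv₀ hx₀ |>.2 hx₁)
  rw [inv_rpow hx₀.le] at h
  have hxt : x ^ t * (x ^ t)⁻¹ = 1 := mul_inv_cancel₀ (rpow_pos_of_pos hx₀ t).ne'
  have e : (1 + x) ^ t = x ^ t * (x⁻¹ + 1) ^ t := by
    rw [← mul_rpow hx₀.le (by positivity), mul_add, mul_inv_cancel₀ hx₀.ne', mul_one, add_comm]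
  rw [e]
  nlinarith [rpow_pos_of_pos hx₀ t]

-- Both sides are affine in `u` and in `c`, so it suffices to compare them at the four corners.
theorem one_add_mul_mul_one_add_mul_le_max {p q u c : ℝ} (hp : 1 ≤ p) (hq : 1 ≤ q) (hpq : p * q = 2)
    (hu₀ : 0 ≤ u) (hu₁ : u ≤ 1) (hc₀ : 0 ≤ c) (hc₁ : c ≤ 1) :
    (1 + (p - 1) * u) * (1 + (q - 1) * c) ≤ max p q * (1 + u * c) := by
  rcases le_total q p with h | h
  · rw [max_eq_left h]
    nlinarith [mul_nonneg (sub_nonneg.2 hu₁) (sub_nonneg.2 hc₁), mul_nonneg hu₀ hc₀,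
      mul_nonneg (mul_nonneg hu₀ hc₀) (sub_nonneg.2 hp), mul_nonneg (sub_nonneg.2 hu₁) hc₀]
  · rw [max_eq_right h]
    nlinarith [mul_nonneg (sub_nonneg.2 hu₁) (sub_nonneg.2 hc₁), mul_nonneg hu₀ hc₀,
      mul_nonneg (mul_nonneg hu₀ hc₀) (sub_nonneg.2 hq), mul_nonneg (sub_nonneg.2 hc₁) hu₀]

theorem one_add_rpow_mul_one_add_rpow_le {t x y : ℝ} (ht₀ : 0 ≤ t) (ht₁ : t ≤ 1)
    (hx₀ : 0 ≤ x) (hx₁ : x ≤ 1) (hy₀ : 0 ≤ y) (hy₁ : y ≤ 1) :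
    (1 + x) ^ t * (1 + y) ^ (1 - t) ≤ max (2 ^ t) (2 ^ (1 - t)) * (1 + x ^ t * y ^ (1 - t)) := by
  have hp : (1 : ℝ) ≤ 2 ^ t := one_le_rpow one_le_two ht₀
  have hq : (1 : ℝ) ≤ 2 ^ (1 - t) := one_le_rpow one_le_two (sub_nonneg.2 ht₁)
  have hpq : (2 : ℝ) ^ t * 2 ^ (1 - t) = 2 := by
    rw [← rpow_add two_pos, add_sub_cancel, rpow_one]
  calc (1 + x) ^ t * (1 + y) ^ (1 - t)
      ≤ (1 + (2 ^ t - 1) * x ^ t) * (1 + (2 ^ (1 - t) - 1) * y ^ (1 - t)) :=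
        mul_le_mul (one_add_rpow_le ht₀ ht₁ hx₀ hx₁)
          (one_add_rpow_le (sub_nonneg.2 ht₁) (by linarith) hy₀ hy₁) (by positivity)
          (add_nonneg zero_le_one (mul_nonneg (by linarith) (rpow_nonneg hx₀ t)))
    _ ≤ max (2 ^ t) (2 ^ (1 - t)) * (1 + x ^ t * y ^ (1 - t)) :=
        one_add_mul_mul_one_add_mul_le_max hp hq hpq (rpow_nonneg hx₀ t) (rpow_le_one hx₀ hx₁ ht₀)
          (rpow_nonneg hy₀ _) (rpow_le_one hy₀ hy₁ (sub_nonneg.2 ht₁))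

theorem rpow_mul_rpow_div_eq {α β A B D : ℝ} (hα : α ≠ 0) (hβ : β ≠ 0)
    (hA : 0 ≤ A) (hB : 0 < B) (hD : 0 ≤ D) :
    A ^ (1 / β) * B ^ (1 / α) / (D ^ (1 / α) * B ^ (1 / β)) =
      (A ^ (α / β) * B ^ (1 - α / β) / D) ^ (1 / α) := by
  have e₁ : α / β * (1 / α) = 1 / β := by field_simp
  have e₂ : (1 - α / β) * (1 / α) = 1 / α - 1 / β := by field_simp
  rw [div_rpow (by positivity) hD, mul_rpow (by positivity) (by positivity), ← rpow_mul hA,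
    ← rpow_mul hB.le, e₁, e₂, rpow_sub hB]
  ring

theorem Cfun_le_max {α β γ ε : ℝ} (hα : 0 < α) (hαβ : α < β) (hγ : -(1 / β) < γ)
    (hε₀ : 0 ≤ ε) (hε₁ : ε ≤ 1) :
    Cfun α β γ ε ≤ max (2 ^ (1 / α - 1 / β)) (2 ^ (1 / β)) := by
  have hβ : 0 < β := hα.trans hαβ
  set t := α / β with ht
  have ht₀ : 0 ≤ t := by positivity
  have ht₁ : t ≤ 1 := (div_le_one hβ).2 hαβ.le
  have hγβ : 0 < γ * β + 1 := by
    have := mul_lt_mul_of_pos_right hγ hβ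
    rw [neg_mul, one_div_mul_cancel hβ.ne'] at this
    linarith
  have hγα : 0 < γ * α + 1 := by
    rcases le_total 0 γ with h | h <;> nlinarith
  set x := ε ^ (γ * β + 1)
  have hx₀ : 0 ≤ x := rpow_nonneg hε₀ _
  have hx₁ : x ≤ 1 := rpow_le_one hε₀ hε₁ hγβ.le
  have hsplit : ε ^ (γ * α + 1) = x ^ t * ε ^ (1 - t) := by
    have e : (γ * β + 1) * t + (1 - t) = γ * α + 1 := by rw [ht]; field_simp; ring
    rw [← rpow_mul hε₀, ← rpow_add' hε₀ (e ▸ hγα.ne'), e]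
  have h₁ : (2 : ℝ) ^ (1 / α - 1 / β) = (2 ^ (1 - t)) ^ (1 / α) := by
    rw [← rpow_mul zero_le_two, ht]; congr 1; field_simp
  have h₂ : (2 : ℝ) ^ (1 / β) = (2 ^ t) ^ (1 / α) := by
    rw [← rpow_mul zero_le_two, ht]; congr 1; field_simp
  rw [Cfun, rpow_mul_rpow_div_eq hα.ne' hβ.ne' (by positivity) (by positivity) (by positivity),
    hsplit, h₁, h₂, max_comm, ← rpow_max (by positivity) (by positivity) (by positivity)]
  gcongr
  rw [add_comm x, add_comm _ 1]
  exact div_le_of_le_mul₀ (by positivity) (by positivity)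
    (one_add_rpow_mul_one_add_rpow_le ht₀ ht₁ hx₀ hx₁ hε₀ hε₁)

theorem Cfun_denom_pos {α β γ ε : ℝ} (hε : 0 ≤ ε) :
    0 < (ε ^ (γ * α + 1) + 1) ^ (1 / α) * (1 + ε) ^ (1 / β) := by
  have := rpow_nonneg hε (γ * α + 1)
  positivity

theorem continuous_Cfun_gamma {α β ε : ℝ} (hε : 0 < ε) : Continuous fun γ => Cfun α β γ ε := by
  have hpow : ∀ s p : ℝ, Continuous fun γ : ℝ => (ε ^ (γ * s + 1) + 1) ^ p := fun s p =>
    (((continuous_const_rpow hε.ne').comp (by fun_prop)).add continuous_const).rpow_const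
      fun γ => Or.inl (add_pos_of_nonneg_of_pos (rpow_nonneg hε.le _) one_pos).ne'
  exact ((hpow β _).mul continuous_const).div ((hpow α _).mul continuous_const)
    fun γ => (Cfun_denom_pos hε.le).ne'

theorem continuousOn_Cfun {α β γ : ℝ} (hβ : 0 ≤ γ * β + 1) (hα : 0 ≤ γ * α + 1) :
    ContinuousOn (Cfun α β γ) (Ici 0) := by
  have hpow : ∀ q p : ℝ, 0 ≤ q → ContinuousOn (fun ε : ℝ => (ε ^ q + 1) ^ p) (Ici 0) :=
    fun q p hq => ((continuous_rpow_const hq).add continuous_const).continuousOn.rpow_const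
      fun ε hε => Or.inl (add_pos_of_nonneg_of_pos (rpow_nonneg hε _) one_pos).ne'
  have hone : ∀ p : ℝ, ContinuousOn (fun ε : ℝ => (1 + ε) ^ p) (Ici 0) := fun p =>
    (continuous_const.add continuous_id).continuousOn.rpow_const
      fun ε hε => Or.inl (add_pos_of_pos_of_nonneg one_pos hε).ne'
  exact ((hpow _ _ hβ).mul (hone _)).div ((hpow _ _ hα).mul (hone _))
    fun ε hε => (Cfun_denom_pos hε).ne'

theorem tendsto_Cfun_atTop {α β ε : ℝ} (hα : 0 < α) (hβ : 0 < β) (hε₀ : 0 < ε) (hε₁ : ε < 1) :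
    Tendsto (fun γ => Cfun α β γ ε) atTop (𝓝 ((1 + ε) ^ (1 / α) / (1 + ε) ^ (1 / β))) := by
  have hpow : ∀ s : ℝ, 0 < s →
      Tendsto (fun γ : ℝ => (ε ^ (γ * s + 1) + 1) ^ (1 / s)) atTop (𝓝 1) := fun s hs => by
    have h := (tendsto_rpow_atTop_of_base_lt_one ε (by linarith) hε₁).comp
      (tendsto_atTop_add_const_right _ 1 (tendsto_id.atTop_mul_const hs))
    simpa using (h.add_const 1).rpow_const (p := 1 / s) (Or.inl (by norm_num))
  have := ((hpow β hβ).mul_const ((1 + ε) ^ (1 / α))).div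
    ((hpow α hα).mul_const ((1 + ε) ^ (1 / β))) (by positivity)
  simp only [one_mul] at this
  exact this

theorem Cfun_neg_one_div_zero {α β : ℝ} (hβ : β ≠ 0) (hαβ : α ≠ β) :
    Cfun α β (-(1 / β)) 0 = 2 ^ (1 / β) := by
  have e₁ : -(1 / β) * β + 1 = 0 := by field_simp; ring
  have e₂ : -(1 / β) * α + 1 = (β - α) / β := by field_simp; ring
  simp only [Cfun, e₁, e₂, rpow_zero, zero_rpow (div_ne_zero (sub_ne_zero.2 hαβ.symm) hβ)]
  norm_num

theorem two_rpow_sub_le_of_Cfun_le {α β M : ℝ} (hα : 0 < α) (hβ : 0 < β)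
    (hM : ∀ γ, -(1 / β) < γ → ∀ ε ∈ Icc (0 : ℝ) 1, Cfun α β γ ε ≤ M) :
    (2 : ℝ) ^ (1 / α - 1 / β) ≤ M := by
  set g : ℝ → ℝ := fun ε => (1 + ε) ^ (1 / α) / (1 + ε) ^ (1 / β)
  have hg : ∀ ε ∈ Ioo (0 : ℝ) 1, g ε ≤ M := fun ε hε =>
    le_of_tendsto (tendsto_Cfun_atTop hα hβ hε.1 hε.2)
      ((eventually_gt_atTop _).mono fun γ hγ => hM γ hγ ε (Ioo_subset_Icc_self hε))
  have hone : ∀ p : ℝ, 0 ≤ p → Continuous fun ε : ℝ => (1 + ε) ^ p := fun p hp =>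
    (continuous_const.add continuous_id).rpow_const fun _ => Or.inr hp
  have hcont : ContinuousAt g 1 :=
    (hone _ (by positivity)).continuousAt.div (hone _ (by positivity)).continuousAt
      (by positivity)
  have h := le_of_tendsto (hcont.tendsto.mono_left nhdsWithin_le_nhds)
    (mem_of_superset (Ioo_mem_nhdsLT zero_lt_one) hg)
  rwa [show g 1 = 2 ^ (1 / α - 1 / β) by norm_num [g, ← rpow_sub two_pos]] at h

theorem two_rpow_le_of_Cfun_le {α β M : ℝ} (hα : 0 < α) (hαβ : α < β)
    (hM : ∀ γ, -(1 / β) < γ → ∀ ε ∈ Icc (0 : ℝ) 1, Cfun α β γ ε ≤ M) :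
    (2 : ℝ) ^ (1 / β) ≤ M := by
  have hβ : 0 < β := hα.trans hαβ
  have hg : ∀ ε ∈ Ioo (0 : ℝ) 1, Cfun α β (-(1 / β)) ε ≤ M := fun ε hε =>
    le_of_tendsto ((continuous_Cfun_gamma hε.1).continuousWithinAt (s := Ioi _) (x := -(1 / β)))
      (eventually_mem_nhdsWithin.mono fun γ hγ => hM γ hγ ε (Ioo_subset_Icc_self hε))
  have hcont : ContinuousWithinAt (Cfun α β (-(1 / β))) (Ioi 0) 0 :=
    (continuousOn_Cfun (by field_simp; simp) (by field_simp; linarith) 0 self_mem_Ici).mono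
      Ioi_subset_Ici_self
  have h := le_of_tendsto hcont (mem_of_superset (Ioo_mem_nhdsGT zero_lt_one) hg)
  rwa [Cfun_neg_one_div_zero hβ.ne' hαβ.ne] at h

theorem Cfun_le_Cmax {α β γ ε : ℝ} (hα : 0 < α) (hαβ : α < β) (hγ : -(1 / β) < γ)
    (hε : ε ∈ Icc (0 : ℝ) 1) : Cfun α β γ ε ≤ Cmax α β γ :=
  le_csSup ⟨_, by rintro _ ⟨ε, hε, rfl⟩; exact Cfun_le_max hα hαβ hγ hε.1 hε.2⟩
    (mem_image_of_mem _ hε)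

theorem Cmax_le_max {α β γ : ℝ} (hα : 0 < α) (hαβ : α < β) (hγ : -(1 / β) < γ) :
    Cmax α β γ ≤ max (2 ^ (1 / α - 1 / β)) (2 ^ (1 / β)) :=
  csSup_le ((nonempty_Icc.2 zero_le_one).image _) <| by
    rintro _ ⟨ε, hε, rfl⟩; exact Cfun_le_max hα hαβ hγ hε.1 hε.2

theorem sSup_Cmax_eq_max {α β : ℝ} (hα : 0 < α) (hαβ : α < β) :
    sSup {c | ∃ γ : ℝ, -(1 / β) < γ ∧ c = Cmax α β γ} =
      max (2 ^ (1 / α - 1 / β)) (2 ^ (1 / β)) := by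
  have hβ : 0 < β := hα.trans hαβ
  set S := {c | ∃ γ : ℝ, -(1 / β) < γ ∧ c = Cmax α β γ}
  have hS : S.Nonempty := ⟨_, 0, neg_lt_zero.2 (by positivity), rfl⟩
  have hSle : ∀ c ∈ S, c ≤ max (2 ^ (1 / α - 1 / β)) (2 ^ (1 / β)) := by
    rintro _ ⟨γ, hγ, rfl⟩; exact Cmax_le_max hα hαβ hγ
  have hCfun : ∀ γ, -(1 / β) < γ → ∀ ε ∈ Icc (0 : ℝ) 1, Cfun α β γ ε ≤ sSup S :=
    fun γ hγ ε hε => (Cfun_le_Cmax hα hαβ hγ hε).trans (le_csSup ⟨_, hSle⟩ ⟨γ, hγ, rfl⟩)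
  exact le_antisymm (csSup_le hS hSle)
    (max_le (two_rpow_sub_le_of_Cfun_le hα hβ hCfun) (two_rpow_le_of_Cfun_le hα hαβ hCfun))

/-- For `0 < α < β`, the constant `C_{α,β} = sup_{γ ∈ (-1/β,∞)} C_{α,β,γ}` equals
`max{2^{1/α-1/β}, 2^{1/β}}`; explicitly it is `2^{1/α-1/β}` when `0 < α ≤ β/2` and
`2^{1/β}` when `β/2 < α < β`. -/
theorem Cab_case_pos_pos
    (α β : ℝ) (hα : 0 < α) (hαβ : α < β) :
    sSup {c | ∃ γ : ℝ, -(1 / β) < γ ∧ c = Cmax α β γ} =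
        max ((2 : ℝ) ^ (1 / α - 1 / β)) ((2 : ℝ) ^ (1 / β)) ∧
      (α ≤ β / 2 →
        sSup {c | ∃ γ : ℝ, -(1 / β) < γ ∧ c = Cmax α β γ} = (2 : ℝ) ^ (1 / α - 1 / β)) ∧
      (β / 2 < α →
        sSup {c | ∃ γ : ℝ, -(1 / β) < γ ∧ c = Cmax α β γ} = (2 : ℝ) ^ (1 / β)) := by
  have hβ : 0 < β := hα.trans hαβ
  rw [sSup_Cmax_eq_max hα hαβ]
  refine ⟨rfl, fun h => max_eq_left ?_, fun h => max_eq_right ?_⟩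
  · rw [rpow_le_rpow_left_iff one_lt_two, le_sub_iff_add_le, ← two_mul, mul_one_div,
      div_le_div_iff₀ hβ hα]
    linarith
  · rw [rpow_le_rpow_left_iff one_lt_two, sub_le_iff_le_add, ← two_mul, mul_one_div,
      div_le_div_iff₀ hα hβ]
    linarith
end
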